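/- arXiv:math/9810125 — 4 statements merged into one kernel-verified Lean document; each statement's English description precedes it below -/
import Mathlib

section
/- Let K be a compact connected Lie group with maximal torus T, let K̃ be a closed connected subgroup with maximal torus T̃ = T ∩ K̃, let K̄ = Z_K(T̃) be the centralizer of T̃ in K, and let C̄ be the center of K̄. Then the centralizer in K of C̄ equals the centralizer of the identity component C̄⁰, and both equal K̄. -/
/-- A maximal torus of a compact Lie group: a closed connected commutative subgroup which is
maximal among such subgroups.  The predicate `IsMaximalTorusIn T K'` says that `T` is a
maximal torus of the subgroup `K'`. -/
def IsMaximalTorusIn {K : Type*} [Group K] [TopologicalSpace K] (T K' : Subgroup K) : Prop :=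
  T ≤ K' ∧ IsClosed (T : Set K) ∧ IsConnected (T : Set K) ∧
    (∀ a ∈ T, ∀ b ∈ T, a * b = b * a) ∧
    ∀ T' : Subgroup K, T' ≤ K' → IsClosed (T' : Set K) → IsConnected (T' : Set K) →
      (∀ a ∈ T', ∀ b ∈ T', a * b = b * a) → T ≤ T' → T' = T

/-- The identity component of a subgroup `H` of a topological group, viewed again as a
subgroup of the ambient group. -/
def Subgroup.identityComponent {K : Type*} [Group K] [TopologicalSpace K] [IsTopologicalGroup K]
    (H : Subgroup K) : Subgroup K :=
  (Subgroup.connectedComponentOfOne ↥H).map H.subtype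

/-- A connected subgroup contained in `H` lies in the identity component of `H`. -/
lemma le_identityComponent_of_connected {K : Type*} [Group K] [TopologicalSpace K]
    [IsTopologicalGroup K] {S H : Subgroup K} (hconn : IsConnected (S : Set K)) (hle : S ≤ H) :
    S ≤ H.identityComponent := by
  intro s hs
  refine ⟨⟨s, hle hs⟩, ?_, rfl⟩
  haveI : ConnectedSpace (S : Set K) := Subtype.connectedSpace hconn
  have hmap : Continuous fun x : S => (⟨(x : K), hle x.2⟩ : H) :=
    Continuous.subtype_mk continuous_subtype_val _
  have himg : IsConnected ((fun x : S => (⟨(x : K), hle x.2⟩ : H)) '' Set.univ) :=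
    IsConnected.image isConnected_univ _ hmap.continuousOn
  have h1 : (1 : H) ∈ (fun x : S => (⟨(x : K), hle x.2⟩ : H)) '' Set.univ :=
    ⟨⟨1, S.one_mem⟩, Set.mem_univ _, rfl⟩
  have h2 : (⟨s, hle hs⟩ : H) ∈ (fun x : S => (⟨(x : K), hle x.2⟩ : H)) '' Set.univ :=
    ⟨⟨s, hs⟩, Set.mem_univ _, rfl⟩
  exact himg.isPreconnected.subset_connectedComponent h1 h2

/-- Let `K` be a compact connected Lie group with maximal torus `T`, let `K̃`
be a closed connected subgroup with maximal torus `T̃ = T ⊓ K̃`, let `K̄ = Z_K(T̃)` and let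
`C̄` be the center of `K̄` (viewed as the subgroup `K̄ ⊓ Z_K(K̄)` of `K`).  Then the
centralizer in `K` of `C̄` equals the centralizer of the identity component `C̄⁰`, and both
equal `K̄`. -/
theorem centralizer_center_of_centralizer_of_torus
    {𝔼 : Type*} [NormedAddCommGroup 𝔼] [NormedSpace ℝ 𝔼]
    {Hm : Type*} [TopologicalSpace Hm] {I : ModelWithCorners ℝ 𝔼 Hm}
    {K : Type*} [TopologicalSpace K] [ChartedSpace Hm K] [Group K] [IsTopologicalGroup K]
    [LieGroup I (⊤ : ℕ∞) K] [CompactSpace K] [ConnectedSpace K]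
    (T Kt : Subgroup K) (hT : IsMaximalTorusIn T ⊤)
    (hKtcl : IsClosed (Kt : Set K)) (hKtconn : IsConnected (Kt : Set K))
    (hTt : IsMaximalTorusIn (T ⊓ Kt) Kt) :
    Subgroup.centralizer
        ((Subgroup.centralizer ((T ⊓ Kt : Subgroup K) : Set K) ⊓
          Subgroup.centralizer ((Subgroup.centralizer ((T ⊓ Kt : Subgroup K) : Set K) : Subgroup K) : Set K) : Subgroup K) : Set K)
      = Subgroup.centralizer ((T ⊓ Kt : Subgroup K) : Set K) ∧
    Subgroup.centralizer
        (((Subgroup.centralizer ((T ⊓ Kt : Subgroup K) : Set K) ⊓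
          Subgroup.centralizer ((Subgroup.centralizer ((T ⊓ Kt : Subgroup K) : Set K) : Subgroup K) : Set K) : Subgroup K).identityComponent : Set K))
      = Subgroup.centralizer ((T ⊓ Kt : Subgroup K) : Set K) := by
  set Tt : Subgroup K := T ⊓ Kt with hTtdef
  set Kb : Subgroup K := Subgroup.centralizer (Tt : Set K) with hKbdef
  set Cb : Subgroup K := Kb ⊓ Subgroup.centralizer (Kb : Set K) with hCbdef
  -- T̃ is contained in C̄
  have hTtKb : Tt ≤ Kb := fun t ht =>
    Subgroup.mem_centralizer_iff.mpr fun h hh => hTt.2.2.2.1 h hh t ht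
  have hTtZ : Tt ≤ Subgroup.centralizer (Kb : Set K) := fun t ht =>
    Subgroup.mem_centralizer_iff.mpr fun h hh =>
      (Subgroup.mem_centralizer_iff.mp hh t ht).symm
  have hTtCb : Tt ≤ Cb := le_inf hTtKb hTtZ
  -- K̄ centralizes C̄
  have hKbZ : Kb ≤ Subgroup.centralizer (Cb : Set K) := fun k hk =>
    Subgroup.mem_centralizer_iff.mpr fun c hc =>
      (Subgroup.mem_centralizer_iff.mp hc.2 k hk).symm
  -- centralizer is antitone on subgroups
  have anti : ∀ {A B : Subgroup K}, A ≤ B →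
      Subgroup.centralizer (B : Set K) ≤ Subgroup.centralizer (A : Set K) := by
    intro A B hAB g hg
    exact Subgroup.mem_centralizer_iff.mpr fun a ha =>
      Subgroup.mem_centralizer_iff.mp hg a (hAB ha)
  have h1 : Subgroup.centralizer (Cb : Set K) = Kb :=
    le_antisymm (anti hTtCb) hKbZ
  have hTtconn : IsConnected (Tt : Set K) := hTt.2.2.1
  have hTtC0 : Tt ≤ Cb.identityComponent :=
    le_identityComponent_of_connected hTtconn hTtCb
  have hC0Cb : Cb.identityComponent ≤ Cb := by
    rintro x ⟨y, _, rfl⟩; exact y.2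
  have h2 : Subgroup.centralizer ((Cb.identityComponent : Subgroup K) : Set K) = Kb :=
    le_antisymm (anti hTtC0) (le_trans hKbZ (anti hC0Cb))
  exact ⟨h1, h2⟩
end

section
/- Let K be a compact connected Lie group with maximal torus T, K̃ a closed connected subgroup with maximal torus T̃ = T ∩ K̃, K̄ = Z_K(T̃), and C̄ the center of K̄. Then the normalizers in K of C̄, of the identity component C̄⁰, and of K̄ all coincide, and moreover N_K(T̃) ⊂ N_K(C̄). -/
/-- The identity component of `H`, as a set, is the connected component of `1` inside the
set `H`. -/
lemma Subgroup.identityComponent_coe {K : Type*} [Group K] [TopologicalSpace K]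
    [IsTopologicalGroup K] (H : Subgroup K) :
    (H.identityComponent : Set K) = connectedComponentIn (H : Set K) 1 := by
  rw [connectedComponentIn_eq_image H.one_mem]
  rfl

/-- Normalizing a subgroup normalizes its centralizer. -/
lemma normalizer_le_normalizer_centralizer {G : Type*} [Group G] (H : Subgroup G) :
    Subgroup.normalizer (H : Set G) ≤ Subgroup.normalizer (Subgroup.centralizer (H : Set G) : Set G) := by
  intro g hg
  rw [Subgroup.mem_normalizer_iff] at hg ⊢
  intro n
  simp only [Subgroup.mem_centralizer_iff, SetLike.mem_coe]
  constructor
  · intro hn h hh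
    have h1 : g⁻¹ * h * g ∈ H := by
      have e : g * (g⁻¹ * h * g) * g⁻¹ = h := by group
      exact (hg _).mpr (by rw [e]; exact hh)
    have h2 := hn _ h1
    calc h * (g * n * g⁻¹) = g * ((g⁻¹ * h * g) * n) * g⁻¹ := by group
      _ = g * (n * (g⁻¹ * h * g)) * g⁻¹ := by rw [h2]
      _ = (g * n * g⁻¹) * h := by group
  · intro hn h hh
    have h1 : g * h * g⁻¹ ∈ H := (hg h).mp hh
    have h2 := hn _ h1
    calc h * n = g⁻¹ * ((g * h * g⁻¹) * (g * n * g⁻¹)) * g := by group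
      _ = g⁻¹ * ((g * n * g⁻¹) * (g * h * g⁻¹)) * g := by rw [h2]
      _ = n * h := by group

/-- An element normalizing two subgroups normalizes their intersection. -/
lemma mem_normalizer_inf {G : Type*} [Group G] {A B : Subgroup G} {g : G}
    (hA : g ∈ Subgroup.normalizer (A : Set G)) (hB : g ∈ Subgroup.normalizer (B : Set G)) :
    g ∈ Subgroup.normalizer ((A ⊓ B : Subgroup G) : Set G) := by
  rw [Subgroup.mem_normalizer_iff] at hA hB ⊢
  intro n
  simp only [SetLike.mem_coe, Subgroup.mem_inf]
  exact and_congr (hA n) (hB n)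

/-- Normalizing a subgroup of a topological group normalizes its identity component. -/
lemma normalizer_le_normalizer_identityComponent {K : Type*} [Group K] [TopologicalSpace K]
    [IsTopologicalGroup K] (H : Subgroup K) :
    Subgroup.normalizer (H : Set K) ≤ Subgroup.normalizer (H.identityComponent : Set K) := by
  intro g hg
  rw [Subgroup.mem_normalizer_iff] at hg ⊢
  set e : K ≃ₜ K := (Homeomorph.mulLeft g).trans (Homeomorph.mulRight g⁻¹) with he
  have heval : ∀ x : K, e x = g * x * g⁻¹ := fun x => rfl
  have himg : e '' (H : Set K) = (H : Set K) := by
    ext x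
    simp only [Set.mem_image, SetLike.mem_coe]
    constructor
    · rintro ⟨h, hh, rfl⟩
      rw [heval]
      exact (hg h).mp hh
    · intro hx
      refine ⟨g⁻¹ * x * g, ?_, ?_⟩
      · have e2 : g * (g⁻¹ * x * g) * g⁻¹ = x := by group
        exact (hg _).mpr (by rw [e2]; exact hx)
      · rw [heval]; group
  have hone : (1 : K) ∈ (H : Set K) := H.one_mem
  have hcc : e '' connectedComponentIn (H : Set K) 1 = connectedComponentIn (H : Set K) 1 := by
    have h1 := e.image_connectedComponentIn hone
    rw [himg] at h1
    have e1 : e 1 = 1 := by rw [heval]; group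
    rw [e1] at h1
    exact h1
  intro n
  rw [← SetLike.mem_coe, ← SetLike.mem_coe, Subgroup.identityComponent_coe]
  constructor
  · intro hn
    have : e n ∈ e '' connectedComponentIn (H : Set K) 1 := Set.mem_image_of_mem _ hn
    rw [hcc, heval] at this
    exact this
  · intro hn
    rw [← hcc] at hn
    obtain ⟨m, hm, hme⟩ := hn
    have : m = n := e.injective (by rw [hme, heval])
    rwa [← this]

/-- Let `K` be a compact connected Lie group with maximal torus `T`, let `K̃`
be a closed connected subgroup with maximal torus `T̃ = T ⊓ K̃`, let `K̄ = Z_K(T̃)` and let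
`C̄` be the center of `K̄`.  Then the normalizers in `K` of `C̄`, of its identity component
`C̄⁰`, and of `K̄` all coincide; moreover `N_K(T̃) ⊆ N_K(C̄)`. -/
theorem normalizers_of_center_of_centralizer_coincide
    {𝔼 : Type*} [NormedAddCommGroup 𝔼] [NormedSpace ℝ 𝔼]
    {Hm : Type*} [TopologicalSpace Hm] {I : ModelWithCorners ℝ 𝔼 Hm}
    {K : Type*} [TopologicalSpace K] [ChartedSpace Hm K] [Group K] [IsTopologicalGroup K]
    [LieGroup I (⊤ : ℕ∞) K] [CompactSpace K] [ConnectedSpace K]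
    (T Kt : Subgroup K) (hT : IsMaximalTorusIn T ⊤)
    (hKtcl : IsClosed (Kt : Set K)) (hKtconn : IsConnected (Kt : Set K))
    (hTt : IsMaximalTorusIn (T ⊓ Kt) Kt)
    -- abbreviations, fixed by defining equations
    (Kbar Cbar : Subgroup K)
    (hKbar : Kbar = Subgroup.centralizer ((T ⊓ Kt : Subgroup K) : Set K))
    (hCbar : Cbar = Kbar ⊓ Subgroup.centralizer (Kbar : Set K)) :
    Subgroup.normalizer (Cbar : Set K) = Subgroup.normalizer (Cbar.identityComponent : Set K) ∧
    Subgroup.normalizer (Cbar : Set K) = Subgroup.normalizer (Kbar : Set K) ∧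
    Subgroup.normalizer ((T ⊓ Kt : Subgroup K) : Set K) ≤ Subgroup.normalizer (Cbar : Set K) := by
  set Tt : Subgroup K := T ⊓ Kt with hTtdef
  -- T̃ is contained in K̄ (T̃ is commutative)
  have hTtKbar : Tt ≤ Kbar := by
    rw [hKbar]
    intro t ht
    rw [Subgroup.mem_centralizer_iff]
    intro h hh
    exact hTt.2.2.2.1 h hh t ht
  -- T̃ centralizes K̄
  have hTtcKbar : Tt ≤ Subgroup.centralizer (Kbar : Set K) := by
    intro t ht
    rw [Subgroup.mem_centralizer_iff]
    intro k hk
    rw [hKbar] at hk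
    exact (Subgroup.mem_centralizer_iff.mp hk t ht).symm
  -- hence T̃ ⊆ C̄
  have hTtCbar : Tt ≤ Cbar := by
    rw [hCbar]; exact le_inf hTtKbar hTtcKbar
  -- K̄ centralizes C̄
  have hKbarcCbar : Kbar ≤ Subgroup.centralizer (Cbar : Set K) := by
    intro k hk
    rw [Subgroup.mem_centralizer_iff]
    intro c hc
    rw [hCbar] at hc
    exact (Subgroup.mem_centralizer_iff.mp hc.2 k hk).symm
  -- K̄ is the centralizer of C̄
  have hcent : Subgroup.centralizer (Cbar : Set K) = Kbar := by
    refine le_antisymm ?_ hKbarcCbar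
    rw [hKbar]
    exact Subgroup.centralizer_le hTtCbar
  -- T̃ is contained in the identity component of C̄
  have hTtCbar0 : Tt ≤ Cbar.identityComponent := by
    intro t ht
    rw [← SetLike.mem_coe, Subgroup.identityComponent_coe]
    refine hTt.2.2.1.isPreconnected.subset_connectedComponentIn Tt.one_mem ?_ ht
    exact fun x hx => hTtCbar hx
  -- K̄ is also the centralizer of C̄⁰
  have hcent0 : Subgroup.centralizer (Cbar.identityComponent : Set K) = Kbar := by
    refine le_antisymm ?_ ?_
    · rw [hKbar]
      exact Subgroup.centralizer_le hTtCbar0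
    · refine le_trans hKbarcCbar (Subgroup.centralizer_le ?_)
      intro x hx
      rw [SetLike.mem_coe, ← SetLike.mem_coe, Subgroup.identityComponent_coe] at hx
      exact connectedComponentIn_subset _ _ hx
  -- N(C̄) ≤ N(K̄)
  have h1 : Subgroup.normalizer (Cbar : Set K) ≤ Subgroup.normalizer (Kbar : Set K) := by
    have := normalizer_le_normalizer_centralizer Cbar
    rwa [hcent] at this
  -- N(K̄) ≤ N(C̄)
  have h2 : Subgroup.normalizer (Kbar : Set K) ≤ Subgroup.normalizer (Cbar : Set K) := by
    intro g hg
    rw [hCbar]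
    exact mem_normalizer_inf hg (normalizer_le_normalizer_centralizer Kbar hg)
  have hCK : Subgroup.normalizer (Cbar : Set K) = Subgroup.normalizer (Kbar : Set K) := le_antisymm h1 h2
  -- N(C̄⁰) ≤ N(K̄)
  have h3 : Subgroup.normalizer (Cbar.identityComponent : Set K) ≤
      Subgroup.normalizer (Kbar : Set K) := by
    have := normalizer_le_normalizer_centralizer Cbar.identityComponent
    rwa [hcent0] at this
  refine ⟨le_antisymm (normalizer_le_normalizer_identityComponent Cbar)
      (le_trans h3 h2), hCK, ?_⟩
  have := normalizer_le_normalizer_centralizer Tt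
  rw [← hKbar] at this
  exact le_trans this h2
end

section
/- Let R be a root system in a real vector space with Weyl group W, let R̄ be a subsystem of R consisting of all roots vanishing on a fixed subspace, with Weyl group W̄, and let S̄ be a base of R̄. Then the normalizer of R̄ in W decomposes as a semidirect product N_W(R̄) ≅ N_W(S̄) ⋉ W̄, where N_W(S̄) is the stabilizer of the set S̄ in W. -/
noncomputable section
open scoped RealInnerProductSpace Pointwise

variable {V : Type*} [NormedAddCommGroup V] [InnerProductSpace ℝ V] [FiniteDimensional ℝ V]

/-- The (orthogonal) reflection in the hyperplane perpendicular to `α`, as a map. -/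
def reflv (α x : V) : V := x - (2 * ⟪α, x⟫ / ⟪α, α⟫) • α

/-- The Weyl group of a set of roots: the subgroup of the group of linear isometries
generated by the reflections in the roots. -/
def weylOf (Rs : Set V) : Subgroup (V ≃ₗᵢ[ℝ] V) :=
  Subgroup.closure {w | ∃ α ∈ Rs, ∀ x, w x = reflv α x}

set_option linter.unusedSectionVars false

lemma reflv_zero (x : V) : reflv 0 x = x := by
  simp [reflv]

lemma reflv_add (α x y : V) : reflv α (x + y) = reflv α x + reflv α y := by
  simp only [reflv, inner_add_right]
  rw [mul_add, add_div, add_smul]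
  abel

lemma reflv_smul (α : V) (c : ℝ) (x : V) : reflv α (c • x) = c • reflv α x := by
  simp only [reflv, real_inner_smul_right, smul_sub, smul_smul]
  ring_nf

lemma inner_reflv (α x : V) : ⟪α, reflv α x⟫ = -⟪α, x⟫ ∨ α = 0 := by
  by_cases h : α = 0
  · exact Or.inr h
  · left
    have hq : ⟪α, α⟫ ≠ 0 := fun hz => h (inner_self_eq_zero.mp hz)
    simp only [reflv, inner_sub_right, real_inner_smul_right]
    field_simp
    ring

lemma reflv_involutive (α : V) : Function.Involutive (reflv α) := by
  intro x
  by_cases h : α = 0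
  · simp [h, reflv_zero]
  · have hq : ⟪α, α⟫ ≠ 0 := fun hz => h (inner_self_eq_zero.mp hz)
    have h1 : ⟪α, reflv α x⟫ = -⟪α, x⟫ := (inner_reflv α x).resolve_right h
    simp only [reflv] at h1 ⊢
    rw [h1]
    rw [sub_sub, ← add_smul]
    have : 2 * ⟪α, x⟫ / ⟪α, α⟫ + 2 * -⟪α, x⟫ / ⟪α, α⟫ = 0 := by field_simp; ring
    rw [this, zero_smul, sub_zero]

lemma reflv_norm (α x : V) : ‖reflv α x‖ = ‖x‖ := by
  by_cases h : α = 0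
  · simp [h, reflv_zero]
  · have hq : ⟪α, α⟫ ≠ 0 := fun hz => h (inner_self_eq_zero.mp hz)
    have : ⟪reflv α x, reflv α x⟫ = ⟪x, x⟫ := by
      simp only [reflv, inner_sub_sub_self, real_inner_smul_left, real_inner_smul_right,
        inner_sub_left, inner_sub_right]
      have hsym : ⟪x, α⟫ = ⟪α, x⟫ := real_inner_comm α x
      field_simp
      ring_nf
      rw [hsym]
      ring
    have h2 : ‖reflv α x‖ ^ 2 = ‖x‖ ^ 2 := by
      rw [← real_inner_self_eq_norm_sq, ← real_inner_self_eq_norm_sq, this]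
    nlinarith [norm_nonneg (reflv α x), norm_nonneg x]

/-- reflection as a linear isometry equivalence -/
def rIso (α : V) : V ≃ₗᵢ[ℝ] V :=
  { toFun := reflv α
    map_add' := reflv_add α
    map_smul' := reflv_smul α
    invFun := reflv α
    left_inv := reflv_involutive α
    right_inv := reflv_involutive α
    norm_map' := reflv_norm α }

@[simp] lemma rIso_apply (α x : V) : rIso α x = reflv α x := rfl

lemma rIso_mul_self (α : V) : rIso α * rIso α = 1 := by
  ext x
  exact reflv_involutive α x

lemma rIso_inv (α : V) : (rIso α)⁻¹ = rIso α := by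
  rw [eq_comm, eq_inv_iff_mul_eq_one, rIso_mul_self]

lemma reflv_neg (α : V) : reflv (-α) = reflv α := by
  funext x
  simp only [reflv, inner_neg_left, inner_neg_right, neg_neg, smul_neg]
  rw [mul_neg, neg_div, neg_smul, neg_neg]

lemma rIso_conj (w : V ≃ₗᵢ[ℝ] V) (α : V) : w * rIso α * w⁻¹ = rIso (w α) := by
  ext x
  show w (reflv α (w⁻¹ x)) = reflv (w α) x
  have h1 : ⟪α, w⁻¹ x⟫ = ⟪w α, x⟫ := by
    conv_rhs => rw [show x = w (w⁻¹ x) by simp]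
    rw [LinearIsometryEquiv.inner_map_map]
  have h2 : ⟪w α, w α⟫ = ⟪α, α⟫ := LinearIsometryEquiv.inner_map_map w α α
  simp only [reflv, map_sub, map_smul, h1, h2]
  simp

lemma rIso_selfadj (α x y : V) : ⟪rIso α x, y⟫ = ⟪x, rIso α y⟫ := by
  conv_lhs => rw [show y = rIso α (rIso α y) from (reflv_involutive α y).symm]
  rw [LinearIsometryEquiv.inner_map_map]

lemma rIso_mem_weylOf {Rs : Set V} {α : V} (h : α ∈ Rs) : rIso α ∈ weylOf Rs :=
  Subgroup.subset_closure ⟨α, h, fun _ => rfl⟩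

lemma weylOf_mono {Rs Rt : Set V} (h : Rs ⊆ Rt) : weylOf Rs ≤ weylOf Rt := by
  apply Subgroup.closure_mono
  rintro w ⟨α, hα, hw⟩
  exact ⟨α, h hα, hw⟩

open Finset in
/-- Bundled data of a reduced crystallographic root "subsystem" with a base. -/
structure RSSetup (V : Type*) [NormedAddCommGroup V] [InnerProductSpace ℝ V] where
  Rs : Finset V
  S : Finset V
  hns : (0 : V) ∉ Rs
  hcl : ∀ α ∈ Rs, ∀ β ∈ Rs, reflv α β ∈ Rs
  hcrys : ∀ α ∈ Rs, ∀ β ∈ Rs, ∃ n : ℤ, 2 * ⟪α, β⟫ / ⟪α, α⟫ = (n : ℝ)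
  hred : ∀ α ∈ Rs, ∀ c : ℝ, c • α ∈ Rs → c = 1 ∨ c = -1
  hSsub : (S : Set V) ⊆ (Rs : Set V)
  hSind : LinearIndependent ℝ (fun x : S => (x : V))
  hSbase : ∀ β ∈ Rs, ∃ c : V → ℤ,
      ((∀ y, 0 ≤ c y) ∨ (∀ y, c y ≤ 0)) ∧ β = ∑ y ∈ S, (c y : ℝ) • y

namespace RSSetup

variable {V : Type*} [NormedAddCommGroup V] [InnerProductSpace ℝ V] [FiniteDimensional ℝ V]
variable (D : RSSetup V)

local instance : DecidableEq V := Classical.decEq V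

lemma root_ne_zero {β : V} (h : β ∈ D.Rs) : β ≠ 0 := fun e => D.hns (e ▸ h)

lemma q_pos {β : V} (h : β ∈ D.Rs) : 0 < ⟪β, β⟫ :=
  lt_of_le_of_ne real_inner_self_nonneg
    (fun hz => D.root_ne_zero h (inner_self_eq_zero.mp hz.symm))

/-- uniqueness of coefficients over the base -/
lemma coeff_unique {c d : V → ℝ}
    (h : ∑ y ∈ D.S, c y • y = ∑ y ∈ D.S, d y • y) : ∀ y ∈ D.S, c y = d y := by
  have h0 : ∑ x : D.S, (c x - d x) • (x : V) = 0 := by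
    simp only [sub_smul]
    rw [Finset.sum_sub_distrib]
    rw [show ∑ x : D.S, c x • (x:V) = ∑ y ∈ D.S, c y • y from
      Finset.sum_attach D.S (fun y => c y • y),
      show ∑ x : D.S, d x • (x:V) = ∑ y ∈ D.S, d y • y from
      Finset.sum_attach D.S (fun y => d y • y), h, sub_self]
  have := Fintype.linearIndependent_iff.mp D.hSind (fun x => c x - d x) h0
  intro y hy
  have h2 := this ⟨y, hy⟩
  simp only [] at h2
  linarith [h2]

open Classical in
/-- the chosen integral coefficient function of a root -/
def cf (β : V) : V → ℤ :=
  if h : β ∈ D.Rs then Classical.choose (D.hSbase β h) else 0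

lemma cf_sum {β : V} (h : β ∈ D.Rs) : β = ∑ y ∈ D.S, (D.cf β y : ℝ) • y := by
  rw [cf, dif_pos h]
  exact (Classical.choose_spec (D.hSbase β h)).2

lemma cf_sign {β : V} (h : β ∈ D.Rs) :
    (∀ y, 0 ≤ D.cf β y) ∨ (∀ y, D.cf β y ≤ 0) := by
  rw [cf, dif_pos h]
  exact (Classical.choose_spec (D.hSbase β h)).1

/-- if the (real) coefficients of root β over the base are `c`, then `cf` agrees with `c` on S -/
lemma cf_eq {β : V} (h : β ∈ D.Rs) {c : V → ℝ}
    (hc : β = ∑ y ∈ D.S, c y • y) : ∀ y ∈ D.S, (D.cf β y : ℝ) = c y :=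
  D.coeff_unique ((D.cf_sum h).symm.trans hc)

open Classical in
/-- the positive roots -/
def P : Finset V := D.Rs.filter (fun β => ∀ y ∈ D.S, 0 ≤ D.cf β y)

lemma P_sub : D.P ⊆ D.Rs := Finset.filter_subset _ _

lemma mem_P {β : V} : β ∈ D.P ↔ β ∈ D.Rs ∧ ∀ y ∈ D.S, 0 ≤ D.cf β y := by
  classical
  simp [P]

lemma neg_mem {β : V} (h : β ∈ D.Rs) : -β ∈ D.Rs := by
  have := D.hcl β h β h
  have hrefl : reflv β β = -β := by
    have hq : ⟪β, β⟫ ≠ 0 := ne_of_gt (D.q_pos h)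
    simp only [reflv]
    rw [mul_div_assoc, div_self hq, mul_one, two_smul]
    abel
  rwa [hrefl] at this

lemma cf_neg {β : V} (h : β ∈ D.Rs) : ∀ y ∈ D.S, (D.cf (-β) y : ℝ) = -(D.cf β y) := by
  apply D.cf_eq (D.neg_mem h)
  conv_lhs => rw [D.cf_sum h]
  rw [← Finset.sum_neg_distrib]
  exact Finset.sum_congr rfl (fun y _ => by rw [← neg_smul])

lemma P_or_neg {β : V} (h : β ∈ D.Rs) : β ∈ D.P ∨ -β ∈ D.P := by
  rcases D.cf_sign h with hp | hn
  · exact Or.inl (D.mem_P.mpr ⟨h, fun y hy => hp y⟩)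
  · right
    refine D.mem_P.mpr ⟨D.neg_mem h, fun y hy => ?_⟩
    have := D.cf_neg h y hy
    have hcast : (D.cf (-β) y : ℝ) = -(D.cf β y : ℝ) := this
    have : (0:ℝ) ≤ (D.cf (-β) y : ℝ) := by
      rw [hcast]
      simp only [neg_nonneg]
      exact_mod_cast hn y
    exact_mod_cast this

lemma not_neg_mem_P {β : V} (h : β ∈ D.P) : -β ∉ D.P := by
  intro hneg
  rcases D.mem_P.mp h with ⟨hR, hpos⟩
  rcases D.mem_P.mp hneg with ⟨hRn, hposn⟩
  have hzero : ∀ y ∈ D.S, (D.cf β y : ℝ) = 0 := by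
    intro y hy
    have h1 := D.cf_neg hR y hy
    have h2 : (0:ℝ) ≤ (D.cf (-β) y : ℝ) := by exact_mod_cast hposn y hy
    have h3 : (0:ℝ) ≤ (D.cf β y : ℝ) := by exact_mod_cast hpos y hy
    linarith [h1 ▸ h2]
  have : β = 0 := by
    rw [D.cf_sum hR]
    apply Finset.sum_eq_zero
    intro y hy
    rw [hzero y hy, zero_smul]
  exact D.root_ne_zero hR this

lemma S_sub_P : D.S ⊆ D.P := by
  classical
  intro y hy
  have hyR : y ∈ D.Rs := D.hSsub hy
  have hind : y = ∑ z ∈ D.S, (if z = y then (1:ℝ) else 0) • z := by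
    have : ∀ z ∈ D.S, (if z = y then (1:ℝ) else 0) • z = (if z = y then z else 0) := by
      intro z _
      split <;> simp
    rw [Finset.sum_congr rfl this, Finset.sum_ite_eq' D.S y (fun z => z), if_pos hy]
  have hcf := D.cf_eq hyR hind
  refine D.mem_P.mpr ⟨hyR, fun z hz => ?_⟩
  have h2 := hcf z hz
  have h3 : (0:ℝ) ≤ (D.cf y z : ℝ) := by
    rw [h2]; split <;> norm_num
  exact_mod_cast h3

/-- key lemma: a simple reflection permutes the positive roots other than the simple root -/
lemma refl_simple_mem_P {α β : V} (hα : α ∈ D.S) (hβ : β ∈ D.P) (hne : β ≠ α) :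
    reflv α β ∈ D.P ∧ reflv α β ≠ α := by
  classical
  have hαR : α ∈ D.Rs := D.hSsub hα
  have hβR : β ∈ D.Rs := D.P_sub hβ
  have hσR : reflv α β ∈ D.Rs := D.hcl α hαR β hβR
  set k : ℝ := 2 * ⟪α, β⟫ / ⟪α, α⟫ with hk
  -- the expansion of the reflected root
  have hexp : reflv α β = ∑ y ∈ D.S,
      ((D.cf β y : ℝ) - k * (if y = α then 1 else 0)) • y := by
    have hkα : k • α = ∑ y ∈ D.S, (k * (if y = α then 1 else 0)) • y := by
      have : ∀ y ∈ D.S, (k * (if y = α then 1 else 0)) • y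
          = (if y = α then k • y else 0) := by
        intro y _
        split <;> simp
      rw [Finset.sum_congr rfl this, Finset.sum_ite_eq' D.S α (fun z => k • z), if_pos hα]
    show β - k • α = _
    conv_lhs => rw [D.cf_sum hβR, hkα]
    rw [← Finset.sum_sub_distrib]
    exact Finset.sum_congr rfl (fun y _ => (sub_smul _ _ y).symm)
  -- existence of a positive coefficient away from α
  have hy0 : ∃ y₀ ∈ D.S, y₀ ≠ α ∧ 0 < D.cf β y₀ := by
    by_contra hcon
    push_neg at hcon
    have hall : ∀ y ∈ D.S, y ≠ α → D.cf β y = 0 := by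
      intro y hy hyne
      have h1 := hcon y hy hyne
      have h2 := (D.mem_P.mp hβ).2 y hy
      omega
    have hβα : β = ((D.cf β α : ℝ)) • α := by
      conv_lhs => rw [D.cf_sum hβR]
      rw [Finset.sum_eq_single_of_mem α hα]
      intro y hy hyne
      rw [hall y hy hyne]
      simp
    have hm : (0:ℝ) ≤ (D.cf β α : ℝ) := by exact_mod_cast (D.mem_P.mp hβ).2 α hα
    rcases D.hred α hαR _ (hβα ▸ hβR) with h1 | h1
    · exact hne (by rw [hβα, h1, one_smul])
    · rw [h1] at hm; linarith
  obtain ⟨y₀, hy₀S, hy₀ne, hy₀pos⟩ := hy0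
  have hcf := D.cf_eq hσR hexp
  have hcfy₀ : (D.cf (reflv α β) y₀ : ℝ) = (D.cf β y₀ : ℝ) := by
    rw [hcf y₀ hy₀S, if_neg hy₀ne]
    ring
  have hy₀pos' : 0 < D.cf (reflv α β) y₀ := by
    have : (0:ℝ) < (D.cf (reflv α β) y₀ : ℝ) := by
      rw [hcfy₀]; exact_mod_cast hy₀pos
    exact_mod_cast this
  have hmemP : reflv α β ∈ D.P := by
    rcases D.cf_sign hσR with hs | hs
    · exact D.mem_P.mpr ⟨hσR, fun y hy => hs y⟩
    · exact absurd (hs y₀) (by omega)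
  refine ⟨hmemP, fun heq => ?_⟩
  have hβeq : β = -α := by
    have := congrArg (reflv α) heq
    rw [reflv_involutive α β] at this
    rw [this]
    have hq : ⟪α, α⟫ ≠ 0 := ne_of_gt (D.q_pos hαR)
    show α - (2 * ⟪α, α⟫ / ⟪α, α⟫) • α = -α
    rw [mul_div_assoc, div_self hq, mul_one, two_smul]
    abel
  have : -β ∈ D.P := by
    rw [hβeq, neg_neg]
    exact D.S_sub_P hα
  exact D.not_neg_mem_P hβ this

def rho : V := ∑ β ∈ D.P, β

lemma mem_P_of_mem_erase {α β : V} (hα : α ∈ D.S) (hβ : β ∈ D.P.erase α) :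
    reflv α β ∈ D.P.erase α := by
  rcases Finset.mem_erase.mp hβ with ⟨hne, hP⟩
  rcases D.refl_simple_mem_P hα hP hne with ⟨h1, h2⟩
  exact Finset.mem_erase.mpr ⟨h2, h1⟩

lemma reflv_rho {α : V} (hα : α ∈ D.S) : reflv α D.rho = D.rho - (2:ℝ) • α := by
  have hαP : α ∈ D.P := D.S_sub_P hα
  have hαR : α ∈ D.Rs := D.hSsub hα
  have hmap : rIso α D.rho = ∑ β ∈ D.P, rIso α β := map_sum (rIso α) _ _
  have hsplit : ∑ β ∈ D.P, rIso α β
      = reflv α α + ∑ β ∈ D.P.erase α, reflv α β := by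
    rw [← Finset.add_sum_erase D.P _ hαP]
    simp only [rIso_apply]
  have hperm : ∑ β ∈ D.P.erase α, reflv α β = ∑ β ∈ D.P.erase α, β := by
    refine Finset.sum_nbij' (reflv α) (reflv α) (fun β hβ => D.mem_P_of_mem_erase hα hβ)
      (fun β hβ => D.mem_P_of_mem_erase hα hβ)
      (fun β _ => reflv_involutive α β) (fun β _ => reflv_involutive α β)
      (fun β _ => rfl)
  have hαα : reflv α α = -α := by
    have hq : ⟪α, α⟫ ≠ 0 := ne_of_gt (D.q_pos hαR)
    show α - (2 * ⟪α, α⟫ / ⟪α, α⟫) • α = -α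
    rw [mul_div_assoc, div_self hq, mul_one, two_smul]
    abel
  have herase : ∑ β ∈ D.P.erase α, β = D.rho - α := by
    have := Finset.add_sum_erase D.P id hαP
    simp only [id] at this
    rw [rho, ← this]
    abel
  show rIso α D.rho = _
  rw [hmap, hsplit, hperm, hαα, herase]
  rw [two_smul]
  abel

lemma rho_inner_simple {α : V} (hα : α ∈ D.S) : ⟪D.rho, α⟫ = ⟪α, α⟫ := by
  have hαR : α ∈ D.Rs := D.hSsub hα
  have hq : ⟪α, α⟫ ≠ 0 := ne_of_gt (D.q_pos hαR)
  have h1 : D.rho - (2 * ⟪α, D.rho⟫ / ⟪α, α⟫) • α = D.rho - (2:ℝ) • α :=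
    D.reflv_rho hα
  have h2 : (2 * ⟪α, D.rho⟫ / ⟪α, α⟫ - 2) • α = 0 := by
    rw [sub_smul, sub_eq_zero]
    exact sub_right_injective h1
  rcases smul_eq_zero.mp h2 with hc | hc
  · have : 2 * ⟪α, D.rho⟫ / ⟪α, α⟫ = 2 := by linarith
    rw [real_inner_comm]
    field_simp at this
    linarith
  · exact absurd hc (D.root_ne_zero hαR)

lemma rho_pos {β : V} (hβ : β ∈ D.P) : 0 < ⟪D.rho, β⟫ := by
  have hβR : β ∈ D.Rs := D.P_sub hβ
  have hexp : ⟪D.rho, β⟫ = ∑ y ∈ D.S, (D.cf β y : ℝ) * ⟪D.rho, y⟫ := by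
    conv_lhs => rw [D.cf_sum hβR]
    rw [inner_sum]
    exact Finset.sum_congr rfl (fun y _ => real_inner_smul_right _ _ _)
  rw [hexp]
  have hy0 : ∃ y ∈ D.S, 0 < D.cf β y := by
    by_contra hcon
    push_neg at hcon
    have : β = 0 := by
      rw [D.cf_sum hβR]
      apply Finset.sum_eq_zero
      intro y hy
      have h1 := hcon y hy
      have h2 := (D.mem_P.mp hβ).2 y hy
      have : D.cf β y = 0 := by omega
      rw [this]; simp
    exact D.root_ne_zero hβR this
  obtain ⟨y₀, hy₀, hpos⟩ := hy0
  apply Finset.sum_pos'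
  · intro y hy
    have h1 : (0:ℝ) ≤ (D.cf β y : ℝ) := by exact_mod_cast (D.mem_P.mp hβ).2 y hy
    have h2 : 0 < ⟪D.rho, y⟫ := by
      rw [D.rho_inner_simple hy]; exact D.q_pos (D.hSsub hy)
    positivity
  · refine ⟨y₀, hy₀, ?_⟩
    have h1 : (0:ℝ) < (D.cf β y₀ : ℝ) := by exact_mod_cast hpos
    have h2 : 0 < ⟪D.rho, y₀⟫ := by
      rw [D.rho_inner_simple hy₀]; exact D.q_pos (D.hSsub hy₀)
    positivity

lemma rho_neg {β : V} (hβR : β ∈ D.Rs) (hβ : β ∉ D.P) : ⟪D.rho, β⟫ < 0 := by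
  have : -β ∈ D.P := (D.P_or_neg hβR).resolve_left hβ
  have := D.rho_pos this
  rw [inner_neg_right] at this
  linarith

lemma rho_ne {β : V} (hβR : β ∈ D.Rs) : ⟪D.rho, β⟫ ≠ 0 := by
  by_cases h : β ∈ D.P
  · exact ne_of_gt (D.rho_pos h)
  · exact ne_of_lt (D.rho_neg hβR h)

/-- the subgroup of isometries stabilizing Rs -/
def stabRs : Subgroup (V ≃ₗᵢ[ℝ] V) where
  carrier := {g | ∀ β ∈ D.Rs, g β ∈ D.Rs ∧ g⁻¹ β ∈ D.Rs}
  one_mem' := fun β hβ => ⟨hβ, hβ⟩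
  mul_mem' := by
    intro a b ha hb β hβ
    constructor
    · show a (b β) ∈ D.Rs
      exact (ha _ ((hb β hβ).1)).1
    · show b⁻¹ (a⁻¹ β) ∈ D.Rs
      exact (hb _ ((ha β hβ).2)).2
  inv_mem' := by
    intro a ha β hβ
    refine ⟨(ha β hβ).2, ?_⟩
    rw [inv_inv]
    exact (ha β hβ).1

lemma weyl_le_stabRs : weylOf (D.Rs : Set V) ≤ D.stabRs := by
  rw [weylOf, Subgroup.closure_le]
  rintro w ⟨α, hα, hw⟩
  have hweq : w = rIso α := by
    ext x; rw [hw x]; rfl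
  intro β hβ
  subst hweq
  rw [rIso_inv]
  exact ⟨D.hcl α hα β hβ, D.hcl α hα β hβ⟩

lemma wfix {g : V ≃ₗᵢ[ℝ] V} (hg : g ∈ weylOf (D.Rs : Set V)) {β : V} (hβ : β ∈ D.Rs) :
    g β ∈ D.Rs :=
  ((D.weyl_le_stabRs hg) β hβ).1

lemma wfix_inv {g : V ≃ₗᵢ[ℝ] V} (hg : g ∈ weylOf (D.Rs : Set V)) {β : V} (hβ : β ∈ D.Rs) :
    g⁻¹ β ∈ D.Rs :=
  ((D.weyl_le_stabRs hg) β hβ).2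

/-- the subgroup of isometries fixing all vectors orthogonal to Rs -/
def fixPerp : Subgroup (V ≃ₗᵢ[ℝ] V) where
  carrier := {g | ∀ v, (∀ β ∈ D.Rs, ⟪β, v⟫ = 0) → g v = v}
  one_mem' := by intro v _; rfl
  mul_mem' := by
    intro a b ha hb v hv
    show a (b v) = v
    rw [hb v hv, ha v hv]
  inv_mem' := by
    intro a ha v hv
    show a⁻¹ v = v
    have := ha v hv
    conv_lhs => rw [← this]
    simp

lemma weyl_le_fixPerp : weylOf (D.Rs : Set V) ≤ D.fixPerp := by
  rw [weylOf, Subgroup.closure_le]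
  rintro w ⟨α, hα, hw⟩ v hv
  rw [hw v]
  show v - (2 * ⟪α, v⟫ / ⟪α, α⟫) • α = v
  rw [hv α hα]
  simp

lemma eq_of_agree_on_Rs {g g' : V ≃ₗᵢ[ℝ] V} (hg : g ∈ weylOf (D.Rs : Set V))
    (hg' : g' ∈ weylOf (D.Rs : Set V)) (h : ∀ β ∈ D.Rs, g β = g' β) : g = g' := by
  have hmem : g⁻¹ * g' ∈ weylOf (D.Rs : Set V) := mul_mem (inv_mem hg) hg'
  have hfix : ∀ β ∈ D.Rs, (g⁻¹ * g') β = β := by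
    intro β hβ
    show g⁻¹ (g' β) = β
    rw [← h β hβ]
    simp
  have hone : g⁻¹ * g' = 1 := by
    ext v
    obtain ⟨y, hy, z, hz, rfl⟩ :=
      (Submodule.span ℝ (D.Rs : Set V)).exists_add_mem_mem_orthogonal v
    have h1 : (g⁻¹ * g') y = y := by
      induction hy using Submodule.span_induction with
      | mem x hx => exact hfix x hx
      | zero => simp
      | add a b _ _ ha hb => rw [map_add, ha, hb]
      | smul c a _ ha => rw [map_smul, ha]
    have h2 : (g⁻¹ * g') z = z := by
      apply D.weyl_le_fixPerp hmem
      intro β hβ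
      exact (Submodule.mem_orthogonal _ _).mp hz _ (Submodule.subset_span hβ)
    show (g⁻¹ * g') (y + z) = y + z
    rw [map_add, h1, h2]
  have := congrArg (fun x => g * x) hone
  simp only [mul_inv_cancel_left, mul_one] at this
  exact this.symm

lemma weyl_finite : Finite ↥(weylOf (D.Rs : Set V)) := by
  classical
  have : ∀ g : ↥(weylOf (D.Rs : Set V)), ∀ β : ↥D.Rs, (g : V ≃ₗᵢ[ℝ] V) β ∈ D.Rs :=
    fun g β => D.wfix g.2 β.2
  apply Finite.of_injective (fun g : ↥(weylOf (D.Rs : Set V)) =>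
    (fun β : ↥D.Rs => (⟨(g : V ≃ₗᵢ[ℝ] V) β, this g β⟩ : ↥D.Rs)))
  intro g g' hgg
  apply Subtype.ext
  apply D.eq_of_agree_on_Rs g.2 g'.2
  intro β hβ
  have := congrFun hgg ⟨β, hβ⟩
  exact congrArg Subtype.val this

lemma reflv_expand {α β : V} (hα : α ∈ D.S) (hβR : β ∈ D.Rs) :
    reflv α β = ∑ y ∈ D.S,
      ((D.cf β y : ℝ) - (2 * ⟪α, β⟫ / ⟪α, α⟫) * (if y = α then 1 else 0)) • y := by
  classical
  set k : ℝ := 2 * ⟪α, β⟫ / ⟪α, α⟫ with hk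
  have hkα : k • α = ∑ y ∈ D.S, (k * (if y = α then 1 else 0)) • y := by
    have : ∀ y ∈ D.S, (k * (if y = α then 1 else 0)) • y
        = (if y = α then k • y else 0) := by
      intro y _
      split <;> simp
    rw [Finset.sum_congr rfl this, Finset.sum_ite_eq' D.S α (fun z => k • z), if_pos hα]
  show β - k • α = _
  conv_lhs => rw [D.cf_sum hβR, hkα]
  rw [← Finset.sum_sub_distrib]
  exact Finset.sum_congr rfl (fun y _ => (sub_smul _ _ y).symm)

lemma exists_pos_coeff {β : V} (hβ : β ∈ D.P) : ∃ y ∈ D.S, 0 < D.cf β y := by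
  by_contra hcon
  push_neg at hcon
  have : β = 0 := by
    rw [D.cf_sum (D.P_sub hβ)]
    apply Finset.sum_eq_zero
    intro y hy
    have h1 := hcon y hy
    have h2 := (D.mem_P.mp hβ).2 y hy
    have : D.cf β y = 0 := by omega
    rw [this]; simp
  exact D.root_ne_zero (D.P_sub hβ) this

lemma ht_pos {β : V} (hβ : β ∈ D.P) : 1 ≤ ∑ y ∈ D.S, D.cf β y := by
  obtain ⟨y₀, hy₀, hpos⟩ := D.exists_pos_coeff hβ
  calc (1:ℤ) ≤ D.cf β y₀ := hpos
    _ ≤ ∑ y ∈ D.S, D.cf β y :=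
      Finset.single_le_sum (fun y hy => (D.mem_P.mp hβ).2 y hy) hy₀

/-- the set of simple reflections -/
def GS : Set (V ≃ₗᵢ[ℝ] V) := {g | ∃ α ∈ D.S, g = rIso α}

/-- the subgroup generated by simple reflections -/
def WS : Subgroup (V ≃ₗᵢ[ℝ] V) := Subgroup.closure D.GS

lemma toS_of_mem_P : ∀ (n : ℕ) (β : V), β ∈ D.P → (∑ y ∈ D.S, D.cf β y) ≤ (n : ℤ) →
    ∃ g ∈ D.WS, g β ∈ D.S := by
  intro n
  induction n with
  | zero =>
    intro β hβ hle
    exact absurd (le_trans (D.ht_pos hβ) hle) (by norm_num)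
  | succ n ih =>
    intro β hβ hle
    by_cases hβS : β ∈ D.S
    · exact ⟨1, one_mem _, by simpa using hβS⟩
    have hβR : β ∈ D.Rs := D.P_sub hβ
    -- find a simple root with positive inner product with β
    have hq : 0 < ⟪β, β⟫ := D.q_pos hβR
    have hexp2 : ⟪β, β⟫ = ∑ y ∈ D.S, (D.cf β y : ℝ) * ⟪β, y⟫ := by
      nth_rewrite 2 [D.cf_sum hβR]
      rw [inner_sum]
      exact Finset.sum_congr rfl (fun y _ => real_inner_smul_right _ _ _)
    have : ∑ y ∈ D.S, (0:ℝ) < ∑ y ∈ D.S, (D.cf β y : ℝ) * ⟪β, y⟫ := by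
      rw [← hexp2]; simpa using hq
    obtain ⟨y, hy, hlt⟩ := Finset.exists_lt_of_sum_lt this
    have hcfy : 0 < D.cf β y := by
      rcases lt_or_ge 0 (D.cf β y) with h | h
      · exact h
      · exfalso
        have h0 : D.cf β y = 0 := le_antisymm h ((D.mem_P.mp hβ).2 y hy)
        rw [h0] at hlt; simp at hlt
    have hinner : 0 < ⟪β, y⟫ := by
      have hcfy' : (0:ℝ) < (D.cf β y : ℝ) := by exact_mod_cast hcfy
      nlinarith
    have hyR : y ∈ D.Rs := D.hSsub hy
    obtain ⟨m, hm⟩ := D.hcrys y hyR β hβR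
    have hmpos : 0 < (m : ℝ) := by
      rw [← hm]
      apply div_pos
      · rw [real_inner_comm]; linarith
      · exact D.q_pos hyR
    have hm1 : 1 ≤ m := by exact_mod_cast hmpos
    have hβne : β ≠ y := fun h => hβS (h ▸ hy)
    have hσP : reflv y β ∈ D.P := (D.refl_simple_mem_P hy hβ hβne).1
    have hexp := D.reflv_expand hy hβR
    rw [hm] at hexp
    have hcf := D.cf_eq (D.hcl y hyR β hβR) hexp
    -- the new height
    have hsum : ∑ z ∈ D.S, D.cf (reflv y β) z = (∑ z ∈ D.S, D.cf β z) - m := by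
      have hreal : ∑ z ∈ D.S, (D.cf (reflv y β) z : ℝ)
          = ∑ z ∈ D.S, ((D.cf β z : ℝ) - (m:ℝ) * (if z = y then 1 else 0)) :=
        Finset.sum_congr rfl (fun z hz => hcf z hz)
      have hind : ∑ z ∈ D.S, ((m:ℝ) * (if z = y then 1 else 0)) = (m:ℝ) := by
        have : ∀ z ∈ D.S, (m:ℝ) * (if z = y then 1 else 0)
            = (if z = y then (m:ℝ) else 0) := by
          intro z _; split <;> simp
        rw [Finset.sum_congr rfl this, Finset.sum_ite_eq' D.S y (fun _ => (m:ℝ)), if_pos hy]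
      rw [Finset.sum_sub_distrib, hind] at hreal
      exact_mod_cast hreal
    have hble : ∑ z ∈ D.S, D.cf (reflv y β) z ≤ (n : ℤ) := by
      rw [hsum]
      push_cast at hle ⊢
      omega
    obtain ⟨g, hgWS, hgS⟩ := ih (reflv y β) hσP hble
    refine ⟨g * rIso y, mul_mem hgWS (Subgroup.subset_closure ⟨y, hy, rfl⟩), ?_⟩
    show g (rIso y β) ∈ D.S
    exact hgS

lemma rIso_mem_WS_of_P {β : V} (hβ : β ∈ D.P) : rIso β ∈ D.WS := by
  obtain ⟨g, hgWS, hgS⟩ := D.toS_of_mem_P (∑ y ∈ D.S, D.cf β y).toNat β hβ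
    (Int.self_le_toNat _)
  have hconj := rIso_conj g β
  have : rIso β = g⁻¹ * rIso (g β) * g := by
    rw [← hconj]; group
  rw [this]
  exact mul_mem (mul_mem (inv_mem hgWS) (Subgroup.subset_closure ⟨g β, hgS, rfl⟩)) hgWS

lemma rIso_neg (β : V) : rIso (-β) = rIso β := by
  ext x
  show reflv (-β) x = reflv β x
  rw [reflv_neg]

lemma rIso_mem_WS {β : V} (hβ : β ∈ D.Rs) : rIso β ∈ D.WS := by
  rcases D.P_or_neg hβ with h | h
  · exact D.rIso_mem_WS_of_P h
  · have := D.rIso_mem_WS_of_P h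
    rwa [rIso_neg] at this

lemma weyl_eq_WS : weylOf (D.Rs : Set V) = D.WS := by
  apply le_antisymm
  · rw [weylOf, Subgroup.closure_le]
    rintro w ⟨α, hα, hw⟩
    have : w = rIso α := by ext x; rw [hw x]; rfl
    rw [this]
    exact D.rIso_mem_WS hα
  · rw [WS, Subgroup.closure_le]
    rintro w ⟨α, hα, rfl⟩
    exact rIso_mem_weylOf (D.hSsub hα)

lemma mem_WS_list {g : V ≃ₗᵢ[ℝ] V} (hg : g ∈ D.WS) :
    ∃ l : List (V ≃ₗᵢ[ℝ] V), (∀ x ∈ l, x ∈ D.GS) ∧ l.prod = g := by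
  have h1 : g ∈ (D.WS).toSubmonoid := hg
  rw [WS, Subgroup.closure_toSubmonoid] at h1
  obtain ⟨l, hl, hprod⟩ := Submonoid.exists_list_of_mem_closure h1
  refine ⟨l, ?_, hprod⟩
  intro x hx
  rcases hl x hx with h | h
  · exact h
  · rw [Set.mem_inv] at h
    obtain ⟨α, hα, he⟩ := h
    have : x = rIso α := by
      rw [← inv_inv x, he, rIso_inv]
    exact ⟨α, hα, this⟩

lemma del : ∀ (l : List (V ≃ₗᵢ[ℝ] V)), (∀ x ∈ l, x ∈ D.GS) →
    ∀ β ∈ D.P, l.prod β ∉ D.P →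
    ∃ l₂ : List (V ≃ₗᵢ[ℝ] V), (∀ x ∈ l₂, x ∈ D.GS) ∧ l₂.length + 1 = l.length ∧
      l.prod * rIso β = l₂.prod := by
  intro l
  induction l with
  | nil =>
    intro _ β hβ hneg
    exact absurd hβ (by simpa using hneg)
  | cons a t ih =>
    intro hmem β hβ hneg
    obtain ⟨γ, hγ, rfl⟩ : a ∈ D.GS := hmem a List.mem_cons_self
    have htmem : ∀ x ∈ t, x ∈ D.GS := fun x hx => hmem x (List.mem_cons_of_mem _ hx)
    by_cases hc : t.prod β ∈ D.P
    · have hne : rIso γ (t.prod β) ∉ D.P := by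
        intro hcon
        apply hneg
        rw [List.prod_cons]
        exact hcon
      have heq : t.prod β = γ := by
        by_contra hne2
        exact hne ((D.refl_simple_mem_P hγ hc hne2).1)
      have hconj : rIso γ = t.prod * rIso β * (t.prod)⁻¹ := by
        rw [rIso_conj t.prod β, heq]
      refine ⟨t, htmem, by simp, ?_⟩
      rw [List.prod_cons, hconj]
      have h2 : t.prod * rIso β * (t.prod)⁻¹ * t.prod * rIso β
          = t.prod * (rIso β * rIso β) := by group
      rw [h2, rIso_mul_self, mul_one]
    · obtain ⟨t₂, ht₂, hlen, hpe⟩ := ih htmem β hβ hc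
      refine ⟨rIso γ :: t₂, ?_, ?_, ?_⟩
      · intro x hx
        rcases List.mem_cons.mp hx with rfl | hx
        · exact ⟨γ, hγ, rfl⟩
        · exact ht₂ x hx
      · simp only [List.length_cons]; omega
      · rw [List.prod_cons, List.prod_cons, mul_assoc, hpe]

lemma prod_eq_one : ∀ (n : ℕ) (l : List (V ≃ₗᵢ[ℝ] V)), l.length ≤ n →
    (∀ x ∈ l, x ∈ D.GS) → (∀ β ∈ D.P, l.prod β ∈ D.P) → l.prod = 1 := by
  intro n
  induction n with
  | zero =>
    intro l hlen _ _
    have : l = [] := List.eq_nil_of_length_eq_zero (Nat.le_zero.mp hlen)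
    simp [this]
  | succ n ih =>
    intro l hlen hmem hP
    rcases List.eq_nil_or_concat l with rfl | ⟨l', a, rfl⟩
    · simp
    obtain ⟨α, hα, rfl⟩ : a ∈ D.GS := hmem _ (by simp)
    simp only [List.concat_eq_append] at hlen hmem hP ⊢
    have hαP : α ∈ D.P := D.S_sub_P hα
    have hprodeq : (l' ++ [rIso α]).prod = l'.prod * rIso α := by
      rw [List.prod_append, List.prod_singleton]
    have hw'α : l'.prod α ∉ D.P := by
      have h1 : (l' ++ [rIso α]).prod α ∈ D.P := hP α hαP
      rw [hprodeq] at h1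
      have hαα : rIso α α = -α := by
        show reflv α α = -α
        have hq : ⟪α, α⟫ ≠ 0 := ne_of_gt (D.q_pos (D.hSsub hα))
        show α - (2 * ⟪α, α⟫ / ⟪α, α⟫) • α = -α
        rw [mul_div_assoc, div_self hq, mul_one, two_smul]
        abel
      have h2 : (l'.prod * rIso α) α = l'.prod (-α) := by
        show l'.prod (rIso α α) = _
        rw [hαα]
      rw [h2, map_neg] at h1
      intro hcon
      rw [show l'.prod α = - -(l'.prod α) by simp] at hcon
      exact D.not_neg_mem_P h1 hcon
    obtain ⟨l₂, hl₂mem, hlen₂, hpe⟩ :=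
      D.del l' (fun x hx => hmem x (by simp [hx])) α hαP hw'α
    have hlp : (l' ++ [rIso α]).prod = l₂.prod := by
      rw [hprodeq, hpe]
    rw [hlp]
    apply ih l₂
    · have hlen' : (l' ++ [rIso α]).length = l'.length + 1 := by simp
      omega
    · exact hl₂mem
    · intro β hβ
      rw [← hlp]
      exact hP β hβ

lemma S_image_eq {g : V ≃ₗᵢ[ℝ] V} (hS : ∀ y ∈ D.S, g y ∈ D.S) :
    Finset.image (⇑g) D.S = D.S := by
  apply Finset.eq_of_subset_of_card_le
  · intro z hz
    obtain ⟨y, hy, rfl⟩ := Finset.mem_image.mp hz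
    exact hS y hy
  · rw [Finset.card_image_of_injective _ g.injective]

lemma P_stable_of_S_stable {g : V ≃ₗᵢ[ℝ] V} (hg : g ∈ weylOf (D.Rs : Set V))
    (hS : ∀ y ∈ D.S, g y ∈ D.S) : ∀ β ∈ D.P, g β ∈ D.P := by
  intro β hβ
  have hβR := D.P_sub hβ
  have hgβR : g β ∈ D.Rs := D.wfix hg hβR
  have hinvS : ∀ z ∈ D.S, g⁻¹ z ∈ D.S := by
    intro z hz
    rw [← D.S_image_eq hS] at hz
    obtain ⟨y, hy, rfl⟩ := Finset.mem_image.mp hz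
    simpa using hy
  have hexp : g β = ∑ z ∈ D.S, (D.cf β (g⁻¹ z) : ℝ) • z := by
    conv_lhs => rw [D.cf_sum hβR]
    rw [map_sum]
    simp only [map_smul]
    refine Finset.sum_nbij' (fun y => g y) (fun z => g⁻¹ z)
      (fun y hy => hS y hy) (fun z hz => hinvS z hz)
      (fun y _ => by simp) (fun z _ => by simp) (fun y hy => by simp)
  have hcf := D.cf_eq hgβR hexp
  refine D.mem_P.mpr ⟨hgβR, fun z hz => ?_⟩
  have h1 := hcf z hz
  have h2 : 0 ≤ D.cf β (g⁻¹ z) := (D.mem_P.mp hβ).2 _ (hinvS z hz)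
  have : (0:ℝ) ≤ (D.cf (g β) z : ℝ) := by
    rw [h1]; exact_mod_cast h2
  exact_mod_cast this

/-- freeness: an element of the Weyl group stabilizing the base is the identity -/
lemma eq_one_of_S_stable {g : V ≃ₗᵢ[ℝ] V} (hg : g ∈ weylOf (D.Rs : Set V))
    (hS : ∀ y ∈ D.S, g y ∈ D.S) : g = 1 := by
  have hP := D.P_stable_of_S_stable hg hS
  have hgWS : g ∈ D.WS := D.weyl_eq_WS ▸ hg
  obtain ⟨l, hlmem, rfl⟩ := D.mem_WS_list hgWS
  exact D.prod_eq_one l.length l le_rfl hlmem hP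

lemma self_expand {y : V} (hy : y ∈ D.S) :
    y = ∑ z ∈ D.S, (if z = y then (1:ℝ) else 0) • z := by
  classical
  have : ∀ z ∈ D.S, (if z = y then (1:ℝ) else 0) • z = (if z = y then z else 0) := by
    intro z _
    split <;> simp
  rw [Finset.sum_congr rfl this, Finset.sum_ite_eq' D.S y (fun z => z), if_pos hy]

/-- main transitivity lemma: any isometry stabilizing Rs can be corrected by an element of
the Weyl group so as to stabilize the base S. -/
lemma exists_S_stabilizer {w : V ≃ₗᵢ[ℝ] V}
    (hw : ∀ β ∈ D.Rs, w β ∈ D.Rs) (hw' : ∀ β ∈ D.Rs, w⁻¹ β ∈ D.Rs) :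
    ∃ b ∈ weylOf (D.Rs : Set V), ∀ y ∈ D.S, (b * w) y ∈ D.S := by
  classical
  haveI : Finite ↥(weylOf (D.Rs : Set V)) := D.weyl_finite
  haveI : Nonempty ↥(weylOf (D.Rs : Set V)) := ⟨1⟩
  obtain ⟨b₀, hmax⟩ := Finite.exists_max
    (fun b : ↥(weylOf (D.Rs : Set V)) => ⟪(b : V ≃ₗᵢ[ℝ] V) (w D.rho), D.rho⟫)
  set g : V ≃ₗᵢ[ℝ] V := (b₀ : V ≃ₗᵢ[ℝ] V) * w with hgdef
  have hgRs : ∀ β ∈ D.Rs, g β ∈ D.Rs := by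
    intro β hβ
    exact D.wfix b₀.2 (hw β hβ)
  have hgRs' : ∀ β ∈ D.Rs, g⁻¹ β ∈ D.Rs := by
    intro β hβ
    have : g⁻¹ = w⁻¹ * (b₀ : V ≃ₗᵢ[ℝ] V)⁻¹ := by rw [hgdef, mul_inv_rev]
    rw [this]
    show w⁻¹ ((b₀ : V ≃ₗᵢ[ℝ] V)⁻¹ β) ∈ D.Rs
    exact hw' _ (D.wfix_inv b₀.2 hβ)
  set u : V := g D.rho with hu
  have hudef : u = (b₀ : V ≃ₗᵢ[ℝ] V) (w D.rho) := rfl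
  have hunn : ∀ α ∈ D.S, 0 ≤ ⟪u, α⟫ := by
    intro α hα
    have hb' : rIso α * (b₀ : V ≃ₗᵢ[ℝ] V) ∈ weylOf (D.Rs : Set V) :=
      mul_mem (rIso_mem_weylOf (D.hSsub hα)) b₀.2
    have h1 := hmax ⟨_, hb'⟩
    simp only at h1
    have h2 : (rIso α * (b₀ : V ≃ₗᵢ[ℝ] V)) (w D.rho) = rIso α u := by
      rw [hudef]; rfl
    rw [h2] at h1
    have h3 : ⟪rIso α u, D.rho⟫ = ⟪u, D.rho⟫ - 2 * ⟪u, α⟫ := by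
      rw [rIso_selfadj]
      have : rIso α D.rho = D.rho - (2:ℝ) • α := D.reflv_rho hα
      rw [this, inner_sub_right, real_inner_smul_right]
    rw [h3, ← hudef] at h1
    linarith
  have hureg : ∀ β ∈ D.Rs, ⟪u, β⟫ ≠ 0 := by
    intro β hβ
    have h1 : ⟪u, β⟫ = ⟪D.rho, g⁻¹ β⟫ := by
      conv_lhs => rw [hu, show β = g (g⁻¹ β) by simp]
      rw [LinearIsometryEquiv.inner_map_map]
    rw [h1]
    exact D.rho_ne (hgRs' β hβ)
  have hupos : ∀ β ∈ D.P, 0 < ⟪u, β⟫ := by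
    intro β hβ
    have hβR := D.P_sub hβ
    have hnn : 0 ≤ ⟪u, β⟫ := by
      have hexp : ⟪u, β⟫ = ∑ y ∈ D.S, (D.cf β y : ℝ) * ⟪u, y⟫ := by
        conv_lhs => rw [D.cf_sum hβR]
        rw [inner_sum]
        exact Finset.sum_congr rfl (fun y _ => real_inner_smul_right _ _ _)
      rw [hexp]
      apply Finset.sum_nonneg
      intro y hy
      have h1 : (0:ℝ) ≤ (D.cf β y : ℝ) := by exact_mod_cast (D.mem_P.mp hβ).2 y hy
      have h2 := hunn y hy
      positivity
    exact lt_of_le_of_ne hnn (Ne.symm (hureg β hβR))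
  have hgP : ∀ β ∈ D.P, g β ∈ D.P := by
    intro β hβ
    have hβR := D.P_sub hβ
    have h1 : g β ∈ D.Rs := hgRs β hβR
    by_contra hcon
    have h2 : -(g β) ∈ D.P := (D.P_or_neg h1).resolve_left hcon
    have h3 := hupos _ h2
    rw [inner_neg_right] at h3
    have h4 : ⟪u, g β⟫ = ⟪D.rho, β⟫ := by
      rw [hu, LinearIsometryEquiv.inner_map_map]
    have h5 := D.rho_pos hβ
    rw [h4] at h3
    linarith
  have hgPimg : Finset.image (⇑g) D.P = D.P := by
    apply Finset.eq_of_subset_of_card_le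
    · intro z hz
      obtain ⟨β, hβ, rfl⟩ := Finset.mem_image.mp hz
      exact hgP β hβ
    · rw [Finset.card_image_of_injective _ g.injective]
  have hgPinv : ∀ β ∈ D.P, g⁻¹ β ∈ D.P := by
    intro β hβ
    rw [← hgPimg] at hβ
    obtain ⟨γ, hγ, rfl⟩ := Finset.mem_image.mp hβ
    simpa using hγ
  -- the base is determined by the positive system: S ⊆ g '' S
  have hSsubimg : D.S ⊆ Finset.image (⇑g) D.S := by
    intro α hα
    have hαR : α ∈ D.Rs := D.hSsub hα
    have hinvP : g⁻¹ α ∈ D.P := hgPinv α (D.S_sub_P hα)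
    have hinvR : g⁻¹ α ∈ D.Rs := D.P_sub hinvP
    set d : V → ℤ := D.cf (g⁻¹ α) with hd
    -- α as a nonnegative combination of the g y
    have hα1 : α = ∑ y ∈ D.S, (d y : ℝ) • g y := by
      conv_lhs => rw [show α = g (g⁻¹ α) by simp, D.cf_sum hinvR]
      rw [map_sum]
      simp only [map_smul]
      rfl
    -- expand each g y over S
    have hα2 : α = ∑ z ∈ D.S, (∑ y ∈ D.S, (d y : ℝ) * (D.cf (g y) z : ℝ)) • z := by
      rw [hα1]
      have : ∀ y ∈ D.S, (d y : ℝ) • g y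
          = ∑ z ∈ D.S, ((d y : ℝ) * (D.cf (g y) z : ℝ)) • z := by
        intro y hy
        conv_lhs => rw [D.cf_sum (D.P_sub (hgP y (D.S_sub_P hy)))]
        rw [Finset.smul_sum]
        exact Finset.sum_congr rfl (fun z _ => by rw [smul_smul])
      rw [Finset.sum_congr rfl this, Finset.sum_comm]
      refine Finset.sum_congr rfl (fun z hz => ?_)
      rw [Finset.sum_smul]
    have hcoef : ∀ z ∈ D.S,
        (∑ y ∈ D.S, (d y : ℝ) * (D.cf (g y) z : ℝ)) = (if z = α then (1:ℝ) else 0) :=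
      D.coeff_unique (hα2.symm.trans (D.self_expand hα))
    obtain ⟨y₀, hy₀S, hy₀pos⟩ := D.exists_pos_coeff hinvP
    have hdy₀ : (0:ℝ) < (d y₀ : ℝ) := by exact_mod_cast hy₀pos
    have hterm : ∀ z ∈ D.S, z ≠ α → (D.cf (g y₀) z : ℝ) = 0 := by
      intro z hz hzne
      have h0 := hcoef z hz
      rw [if_neg hzne] at h0
      have hnn : ∀ y ∈ D.S, 0 ≤ (d y : ℝ) * (D.cf (g y) z : ℝ) := by
        intro y hy
        have ha : (0:ℝ) ≤ (d y : ℝ) := by exact_mod_cast (D.mem_P.mp hinvP).2 y hy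
        have hb : (0:ℝ) ≤ (D.cf (g y) z : ℝ) := by
          exact_mod_cast (D.mem_P.mp (hgP y (D.S_sub_P hy))).2 z hz
        positivity
      have := (Finset.sum_eq_zero_iff_of_nonneg hnn).mp h0 y₀ hy₀S
      nlinarith
    have hgy₀ : g y₀ = (D.cf (g y₀) α : ℝ) • α := by
      conv_lhs => rw [D.cf_sum (D.P_sub (hgP y₀ (D.S_sub_P hy₀S)))]
      rw [Finset.sum_eq_single_of_mem α hα]
      intro z hz hzne
      rw [hterm z hz hzne]
      simp
    have hgy₀R : g y₀ ∈ D.Rs := hgRs y₀ (D.hSsub hy₀S)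
    have hgy₀P : g y₀ ∈ D.P := hgP y₀ (D.S_sub_P hy₀S)
    rcases D.hred α hαR _ (hgy₀ ▸ hgy₀R) with h1 | h1
    · rw [h1, one_smul] at hgy₀
      exact Finset.mem_image.mpr ⟨y₀, hy₀S, hgy₀⟩
    · exfalso
      have : (0:ℝ) ≤ (D.cf (g y₀) α : ℝ) := by
        exact_mod_cast (D.mem_P.mp hgy₀P).2 α hα
      rw [h1] at this
      linarith
  have himg : Finset.image (⇑g) D.S = D.S := by
    apply (Finset.eq_of_subset_of_card_le hSsubimg ?_).symm
    rw [Finset.card_image_of_injective _ g.injective]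
  refine ⟨(b₀ : V ≃ₗᵢ[ℝ] V), b₀.2, fun y hy => ?_⟩
  show g y ∈ D.S
  rw [← himg]
  exact Finset.mem_image_of_mem _ hy

end RSSetup

/-- Let `R` be a (reduced, crystallographic) root system in a real inner
product space with Weyl group `W`, let `R̄ ⊆ R` be the subsystem of all roots vanishing on a
fixed subspace `U`, with Weyl group `W̄`, and let `S̄` be a base of `R̄`.  Then
`N_W(R̄) ≅ N_W(S̄) ⋉ W̄`: every element of `N_W(R̄)` factors uniquely as a product of an
element of `N_W(S̄)` and an element of `W̄`, and `W̄` is normal in `N_W(R̄)`. -/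

theorem normalizer_semidirect_product
    (R : Finset V) (hR0 : (0 : V) ∉ R)
    (hRrefl : ∀ α ∈ R, ∀ β ∈ R, reflv α β ∈ R)
    (hRcrys : ∀ α ∈ R, ∀ β ∈ R, ∃ n : ℤ, 2 * ⟪α, β⟫ / ⟪α, α⟫ = (n : ℝ))
    (hRred : ∀ α ∈ R, ∀ c : ℝ, c • α ∈ R → c = 1 ∨ c = -1)
    (U : Submodule ℝ V)
    (Rbar : Set V) (hRbar : Rbar = {α ∈ (R : Set V) | ∀ u ∈ U, ⟪α, u⟫ = 0})
    (Sbar : Finset V) (hSbarsub : (Sbar : Set V) ⊆ Rbar)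
    (hSbarindep : LinearIndependent ℝ (fun x : Sbar => (x : V)))
    (hSbarbase : ∀ β ∈ Rbar, ∃ c : V → ℤ,
      ((∀ y, 0 ≤ c y) ∨ (∀ y, c y ≤ 0)) ∧ β = ∑ y ∈ Sbar, (c y : ℝ) • y) :
    (∀ w : V ≃ₗᵢ[ℝ] V, w ∈ weylOf (R : Set V) → (⇑w '' Rbar = Rbar) →
      ∃! p : (V ≃ₗᵢ[ℝ] V) × (V ≃ₗᵢ[ℝ] V),
        (p.1 ∈ weylOf (R : Set V) ∧ ⇑p.1 '' (Sbar : Set V) = (Sbar : Set V)) ∧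
        p.2 ∈ weylOf Rbar ∧ w = p.1 * p.2) ∧
    (∀ w : V ≃ₗᵢ[ℝ] V, w ∈ weylOf (R : Set V) → (⇑w '' Rbar = Rbar) →
      ∀ b ∈ weylOf Rbar, w * b * w⁻¹ ∈ weylOf Rbar) := by
  classical
  -- the finset of roots vanishing on U
  set Rsb : Finset V := R.filter (fun α => ∀ u ∈ U, ⟪α, u⟫ = 0) with hRsb
  have hcoe : (Rsb : Set V) = Rbar := by
    rw [hRbar, hRsb, Finset.coe_filter]
    rfl
  have hsubR : Rsb ⊆ R := Finset.filter_subset _ _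
  have hmemRsb : ∀ {α : V}, α ∈ Rsb ↔ α ∈ R ∧ ∀ u ∈ U, ⟪α, u⟫ = 0 := by
    intro α; rw [hRsb, Finset.mem_filter]
  -- the setup structure
  set D : RSSetup V :=
    { Rs := Rsb
      S := Sbar
      hns := fun h => hR0 (hsubR h)
      hcl := by
        intro α hα β hβ
        rcases hmemRsb.mp hα with ⟨hαR, hαU⟩
        rcases hmemRsb.mp hβ with ⟨hβR, hβU⟩
        refine hmemRsb.mpr ⟨hRrefl α hαR β hβR, fun u hu => ?_⟩
        show ⟪β - (2 * ⟪α, β⟫ / ⟪α, α⟫) • α, u⟫ = 0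
        rw [inner_sub_left, real_inner_smul_left, hαU u hu, hβU u hu]
        ring
      hcrys := fun α hα β hβ => hRcrys α (hsubR hα) β (hsubR hβ)
      hred := fun α hα c hc => hRred α (hsubR hα) c (hsubR hc)
      hSsub := by
        intro x hx
        have hx2 : x ∈ Rbar := hSbarsub hx
        rw [← hcoe] at hx2
        exact hx2
      hSind := hSbarindep
      hSbase := by
        intro β hβ
        apply hSbarbase
        rw [← hcoe]
        exact hβ } with hD
  have hweq : weylOf Rbar = weylOf (Rsb : Set V) := by rw [hcoe]
  -- inverse images
  have himg_inv : ∀ (g : V ≃ₗᵢ[ℝ] V) (A : Set V), ⇑g '' A = A → ⇑g⁻¹ '' A = A := by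
    intro g A h
    ext x
    constructor
    · rintro ⟨a, ha, rfl⟩
      rw [← h] at ha
      obtain ⟨c, hc, rfl⟩ := ha
      simpa using hc
    · intro hx
      refine ⟨g x, ?_, by simp⟩
      rw [← h]
      exact Set.mem_image_of_mem _ hx
  -- normality
  have hnormal : ∀ g : V ≃ₗᵢ[ℝ] V, ⇑g '' Rbar = Rbar →
      ∀ b ∈ weylOf Rbar, g * b * g⁻¹ ∈ weylOf Rbar := by
    intro g hgA b hb
    have hgmem : ∀ α ∈ Rbar, g α ∈ Rbar := fun α hα => hgA ▸ Set.mem_image_of_mem _ hα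
    refine Subgroup.closure_induction
      (p := fun x _ => g * x * g⁻¹ ∈ weylOf Rbar) ?_ ?_ ?_ ?_ hb
    · rintro x ⟨α, hα, hx⟩
      have hxe : x = rIso α := by ext v; rw [hx v]; rfl
      rw [hxe, rIso_conj]
      exact rIso_mem_weylOf (hgmem α hα)
    · show g * 1 * g⁻¹ ∈ weylOf Rbar
      have : g * 1 * g⁻¹ = 1 := by group
      rw [this]; exact one_mem _
    · intro x y _ _ hx hy
      show g * (x * y) * g⁻¹ ∈ weylOf Rbar
      have : g * (x * y) * g⁻¹ = (g * x * g⁻¹) * (g * y * g⁻¹) := by group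
      rw [this]; exact mul_mem hx hy
    · intro x _ hx
      show g * x⁻¹ * g⁻¹ ∈ weylOf Rbar
      have : g * x⁻¹ * g⁻¹ = (g * x * g⁻¹)⁻¹ := by group
      rw [this]; exact inv_mem hx
  refine ⟨?_, fun w _ => hnormal w⟩
  intro w hwW hwRb
  -- pointwise stabilization of Rsb by w
  have hw : ∀ β ∈ D.Rs, w β ∈ D.Rs := by
    intro β hβ
    have : w β ∈ Rbar := hwRb ▸ Set.mem_image_of_mem _ (by rw [← hcoe]; exact hβ)
    rw [← hcoe] at this
    exact this
  have hw' : ∀ β ∈ D.Rs, w⁻¹ β ∈ D.Rs := by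
    intro β hβ
    have h2 := himg_inv w Rbar hwRb
    have : w⁻¹ β ∈ Rbar := h2 ▸ Set.mem_image_of_mem _ (by rw [← hcoe]; exact hβ)
    rw [← hcoe] at this
    exact this
  obtain ⟨b, hbW, hbS⟩ := D.exists_S_stabilizer hw hw'
  set g : V ≃ₗᵢ[ℝ] V := b * w with hgdef
  -- memberships
  have hbWRbar : b ∈ weylOf Rbar := hweq ▸ hbW
  have hbWbig : b ∈ weylOf (R : Set V) := by
    apply weylOf_mono _ hbW
    rw [hcoe, hRbar]
    exact fun x hx => hx.1
  have hgW : g ∈ weylOf (R : Set V) := mul_mem hbWbig hwW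
  -- g stabilizes Sbar
  have himgS : Finset.image (⇑g) Sbar = Sbar := D.S_image_eq hbS
  have hgS : ⇑g '' (Sbar : Set V) = (Sbar : Set V) := by
    rw [← Finset.coe_image, himgS]
  -- b and g stabilize Rbar
  have hbRbar : ⇑b '' Rbar = Rbar := by
    have hfin : Finset.image (⇑b) Rsb = Rsb := by
      apply Finset.eq_of_subset_of_card_le
      · intro z hz
        obtain ⟨β, hβ, rfl⟩ := Finset.mem_image.mp hz
        exact D.wfix hbW hβ
      · rw [Finset.card_image_of_injective _ b.injective]
    rw [← hcoe, ← Finset.coe_image, hfin]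
  have hgRbar : ⇑g '' Rbar = Rbar := by
    have : ⇑g '' Rbar = ⇑b '' (⇑w '' Rbar) := by
      rw [← Set.image_comp]; rfl
    rw [this, hwRb, hbRbar]
  have hginvRbar : ⇑g⁻¹ '' Rbar = Rbar := himg_inv g Rbar hgRbar
  set p2 : V ≃ₗᵢ[ℝ] V := g⁻¹ * b⁻¹ * g with hp2def
  have hp2mem : p2 ∈ weylOf Rbar := by
    have := hnormal g⁻¹ hginvRbar b⁻¹ (inv_mem hbWRbar)
    rwa [inv_inv] at this
  have hwfact : w = g * p2 := by
    rw [hp2def, hgdef]; group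
  refine ⟨(g, p2), ⟨⟨hgW, hgS⟩, hp2mem, hwfact⟩, ?_⟩
  rintro ⟨q1, q2⟩ ⟨⟨hq1W, hq1S⟩, hq2W, hqfact⟩
  -- the comparison element
  have hkey : q1 * q2 = g * p2 := by rw [← hqfact, ← hwfact]
  have hhe : p2 * q2⁻¹ = g⁻¹ * q1 := by
    calc p2 * q2⁻¹ = g⁻¹ * (g * p2) * q2⁻¹ := by group
      _ = g⁻¹ * (q1 * q2) * q2⁻¹ := by rw [hkey]
      _ = g⁻¹ * q1 := by group
  set h : V ≃ₗᵢ[ℝ] V := p2 * q2⁻¹ with hhdef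
  have hhmem : h ∈ weylOf (Rsb : Set V) := by
    rw [← hweq]
    exact mul_mem hp2mem (inv_mem hq2W)
  have hhS : ∀ y ∈ D.S, h y ∈ D.S := by
    intro y hy
    have hq1y : q1 y ∈ (Sbar : Set V) := hq1S ▸ Set.mem_image_of_mem _ hy
    have hginv : ∀ z ∈ Sbar, g⁻¹ z ∈ Sbar := by
      intro z hz
      rw [← himgS] at hz
      obtain ⟨y', hy', rfl⟩ := Finset.mem_image.mp hz
      simpa using hy'
    have : h y = g⁻¹ (q1 y) := by rw [hhe]; rfl
    rw [this]
    exact hginv _ hq1y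
  have hone : h = 1 := D.eq_one_of_S_stable hhmem hhS
  have hq2 : q2 = p2 := by
    have h1 : p2 * q2⁻¹ = 1 := hone
    calc q2 = (p2 * q2⁻¹)⁻¹ * p2 := by group
      _ = 1⁻¹ * p2 := by rw [h1]
      _ = p2 := by group
  have hq1 : q1 = g := by
    have h2 : g⁻¹ * q1 = 1 := by rw [← hhe]; exact hone
    calc q1 = g * (g⁻¹ * q1) := by group
      _ = g * 1 := by rw [h2]
      _ = g := mul_one g
  rw [Prod.mk.injEq]
  exact ⟨hq1, hq2⟩
end
end

section
/- With compatible chambers t₊ and t̃₊ and the lifting homomorphism j: W̃ → W, the compatible Weyl set W_com is stable under the duality map w ↦ w* = j(w̃₀) w w₀, where w₀ and w̃₀ are the longest elements of W and W̃; moreover t̃_{w*} = −w̃₀ t̃_w and f*(v*𝒞) = −w̃₀ f*(v𝒞) for all w ∈ W_com. -/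
noncomputable section
open scoped RealInnerProductSpace Pointwise

variable {V : Type*} [NormedAddCommGroup V] [InnerProductSpace ℝ V] [FiniteDimensional ℝ V]

/-- The set of roots `R = R₊ ∪ (−R₊)` determined by a positive system `R₊`. -/
def rootsOf (Rplus : Finset V) : Set V := (Rplus : Set V) ∪ (-(Rplus : Set V))

/-- The closed positive Weyl chamber `t₊` determined by the positive roots. -/
def chamberOf (Rplus : Finset V) : Set V := {x | ∀ α ∈ Rplus, 0 ≤ ⟪α, x⟫}

/-- The convex cone spanned by a finite set (e.g. the root cone `𝒞 = cone(R₊)`). -/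
def coneOf (S : Finset V) : Set V :=
  {x | ∃ c : V → ℝ, (∀ y, 0 ≤ c y) ∧ x = ∑ y ∈ S, c y • y}

/-- The restriction map `f* : t* → t̃*`, realized as the orthogonal projection onto `t̃`. -/
def projV (Vt : Submodule ℝ V) (x : V) : V := (Vt.orthogonalProjectionOnto x : V)

/-- The subsystem `R̄` of roots vanishing on the small Cartan subalgebra `t̃ = Vt`. -/
def RbarOf (Rplus : Finset V) (Vt : Submodule ℝ V) : Set V :=
  {α ∈ rootsOf Rplus | ∀ u ∈ Vt, ⟪α, u⟫ = 0}

/-- The positive chamber `t̃₊ ⊆ t̃` of the subgroup. -/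
def ttplusOf (Rtplus : Finset V) (Vt : Submodule ℝ V) : Set V :=
  {x | x ∈ Vt ∧ ∀ α ∈ Rtplus, 0 ≤ ⟪α, x⟫}

/-- The cone `t̃_w = w t₊ ∩ t̃`. -/
def cubicle (Rplus : Finset V) (Vt : Submodule ℝ V) (w : V ≃ₗᵢ[ℝ] V) : Set V :=
  (⇑w '' chamberOf Rplus) ∩ (Vt : Set V)

/-- The compatible Weyl set `W_com`: those `w ∈ W` for which the chamber `w t₊` is
compatible with `t̃₊`, i.e. `dim (w t₊ ∩ t̃₊) = dim t̃₊`. -/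
def WcomOf (Rplus Rtplus : Finset V) (Vt : Submodule ℝ V) : Set (V ≃ₗᵢ[ℝ] V) :=
  {w | w ∈ weylOf (rootsOf Rplus) ∧
    Module.finrank ℝ (Submodule.span ℝ ((⇑w '' chamberOf Rplus) ∩ ttplusOf Rtplus Vt))
      = Module.finrank ℝ (Submodule.span ℝ (ttplusOf Rtplus Vt))}

/-- The length of a Weyl group element: the number of positive roots made negative. -/
def lenOf (Rplus : Finset V) (w : V ≃ₗᵢ[ℝ] V) : ℕ :=
  Set.ncard {α : V | α ∈ Rplus ∧ w α ∈ -(Rplus : Set V)}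

/-- The relative Weyl set `W_rel`: the shortest representatives of the cosets `W̄\W_com`. -/
def WrelOf (Rplus Rtplus : Finset V) (Vt : Submodule ℝ V) : Set (V ≃ₗᵢ[ℝ] V) :=
  {v | v ∈ WcomOf Rplus Rtplus Vt ∧
    ∀ b ∈ weylOf (RbarOf Rplus Vt), lenOf Rplus v ≤ lenOf Rplus (b * v)}


/-! ### Auxiliary lemmas -/

lemma image_neg_comm' (g : V ≃ₗᵢ[ℝ] V) (X : Set V) : ⇑g '' (-X) = -(⇑g '' X) := by
  ext x
  simp only [Set.mem_image, Set.mem_neg]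
  constructor
  · rintro ⟨y, hy, rfl⟩
    exact ⟨-y, hy, by simp⟩
  · rintro ⟨y, hy, hxy⟩
    exact ⟨-y, by simpa using hy, by rw [map_neg, hxy, neg_neg]⟩

lemma image_neg_of_odd' (f : V → V) (hf : ∀ x, f (-x) = -f x) (X : Set V) :
    f '' (-X) = -(f '' X) := by
  ext x
  simp only [Set.mem_image, Set.mem_neg]
  constructor
  · rintro ⟨y, hy, rfl⟩
    exact ⟨-y, hy, by rw [hf]⟩
  · rintro ⟨y, hy, hxy⟩
    exact ⟨-y, by simpa using hy, by rw [hf, hxy, neg_neg]⟩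

lemma neg_inter' (A B : Set V) : -(A ∩ B) = -A ∩ -B := by
  ext x; simp [Set.mem_neg]

lemma image_chamber_neg' (Rplus : Finset V) (g : V ≃ₗᵢ[ℝ] V)
    (hg : ⇑g '' (Rplus : Set V) = -(Rplus : Set V)) :
    ⇑g '' chamberOf Rplus = -(chamberOf Rplus) := by
  ext x
  simp only [Set.mem_image, Set.mem_neg, chamberOf, Set.mem_setOf_eq]
  constructor
  · rintro ⟨y, hy, rfl⟩ α hα
    have hmem : -α ∈ ⇑g '' (Rplus : Set V) := by
      rw [hg]; simpa using hα
    obtain ⟨β, hβ, hβα⟩ := hmem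
    have h0 := hy β hβ
    rw [inner_neg_right, ← inner_neg_left, ← hβα, g.inner_map_map]
    exact h0
  · intro h
    refine ⟨g.symm x, fun α hα => ?_, g.apply_symm_apply x⟩
    have hmem : g α ∈ -(Rplus : Set V) := by
      rw [← hg]; exact ⟨α, hα, rfl⟩
    have h0 := h (-(g α)) (by simpa using hmem)
    rw [inner_neg_left, inner_neg_right, neg_neg] at h0
    have : (⟪g α, g (g.symm x)⟫ : ℝ) = ⟪α, g.symm x⟫ := g.inner_map_map _ _
    rw [g.apply_symm_apply] at this
    rw [← this]
    exact h0

lemma image_cone_subset' (Rplus : Finset V) (g : V ≃ₗᵢ[ℝ] V)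
    (hg : ⇑g '' (Rplus : Set V) = -(Rplus : Set V)) :
    ⇑g '' coneOf Rplus ⊆ -(coneOf Rplus) := by
  classical
  rintro _ ⟨x, ⟨c, hc, rfl⟩, rfl⟩
  rw [Set.mem_neg]
  refine ⟨fun z => c (g.symm (-z)), fun z => hc _, ?_⟩
  have himg : Rplus.image (fun y => -(g y)) = Rplus := by
    apply Finset.coe_injective
    rw [Finset.coe_image]
    have h1 : (fun y => -(g y)) '' (Rplus : Set V) = -(⇑g '' (Rplus : Set V)) := by
      ext z
      simp only [Set.mem_image, Set.mem_neg]
      constructor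
      · rintro ⟨y, hy, rfl⟩; exact ⟨y, hy, by simp⟩
      · rintro ⟨y, hy, hyz⟩; exact ⟨y, hy, by rw [hyz, neg_neg]⟩
    rw [h1, hg, neg_neg]
  have hinj : ∀ a ∈ Rplus, ∀ b ∈ Rplus, -(g a) = -(g b) → a = b :=
    fun a _ b _ h => g.injective (neg_injective h)
  conv_rhs => rw [← himg]
  rw [Finset.sum_image hinj]
  have hterm : ∀ y ∈ Rplus,
      c (g.symm (- (-(g y)))) • (-(g y)) = -(c y • g y) := by
    intro y _
    rw [neg_neg, g.symm_apply_apply, smul_neg]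
  rw [Finset.sum_congr rfl hterm, Finset.sum_neg_distrib]
  congr 1
  rw [map_sum]
  exact Finset.sum_congr rfl fun y _ => (g.map_smul _ _)

lemma image_cone_neg' (Rplus : Finset V) (g : V ≃ₗᵢ[ℝ] V)
    (hg : ⇑g '' (Rplus : Set V) = -(Rplus : Set V)) :
    ⇑g '' coneOf Rplus = -(coneOf Rplus) := by
  refine Set.Subset.antisymm (image_cone_subset' Rplus g hg) ?_
  have hg' : ⇑g.symm '' (Rplus : Set V) = -(Rplus : Set V) := by
    have h1 : ⇑g.symm '' (-(Rplus : Set V)) = (Rplus : Set V) := by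
      rw [← hg, ← Set.image_comp]
      simp [Function.comp_def]
    calc ⇑g.symm '' (Rplus : Set V) = ⇑g.symm '' (-(-(Rplus : Set V))) := by rw [neg_neg]
      _ = -(⇑g.symm '' (-(Rplus : Set V))) := image_neg_comm' g.symm _
      _ = -(Rplus : Set V) := by rw [h1]
  have h2 := image_cone_subset' Rplus g.symm hg'
  intro x hx
  rw [Set.mem_neg] at hx
  have h3 : g.symm (-x) ∈ -(coneOf Rplus) := h2 ⟨-x, hx, rfl⟩
  rw [Set.mem_neg, map_neg, neg_neg] at h3
  exact ⟨g.symm x, h3, g.apply_symm_apply x⟩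

lemma image_Vt_eq' (Vt : Submodule ℝ V) (u : V ≃ₗᵢ[ℝ] V) (huV : ∀ x ∈ Vt, u x ∈ Vt) :
    ⇑u '' (Vt : Set V) = (Vt : Set V) := by
  have h : Submodule.map (u.toLinearEquiv : V →ₗ[ℝ] V) Vt = Vt := by
    apply Submodule.eq_of_le_of_finrank_le
    · rintro _ ⟨x, hx, rfl⟩
      exact huV x hx
    · rw [LinearEquiv.finrank_map_eq]
  calc ⇑u '' (Vt : Set V) = ⇑(u.toLinearEquiv : V →ₗ[ℝ] V) '' (Vt : Set V) := rfl
    _ = ↑(Submodule.map (u.toLinearEquiv : V →ₗ[ℝ] V) Vt) := (Submodule.map_coe _ _).symm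
    _ = (Vt : Set V) := by rw [h]

lemma proj_comm' (Vt : Submodule ℝ V) (u : V ≃ₗᵢ[ℝ] V) (huV : ∀ x ∈ Vt, u x ∈ Vt) (x : V) :
    projV Vt (u x) = u (projV Vt x) := by
  have hset := image_Vt_eq' Vt u huV
  unfold projV
  apply Vt.eq_starProjection_of_mem_of_inner_eq_zero
  · exact huV _ (SetLike.coe_mem _)
  · intro w hw
    have hw' : w ∈ ⇑u '' (Vt : Set V) := by rw [hset]; exact hw
    obtain ⟨z, hz, rfl⟩ := hw'
    rw [← map_sub, u.inner_map_map]
    exact Vt.starProjection_inner_eq_zero x z hz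

lemma finrank_span_image' (u : V ≃ₗᵢ[ℝ] V) (S : Set V) :
    Module.finrank ℝ (Submodule.span ℝ (⇑u '' S)) = Module.finrank ℝ (Submodule.span ℝ S) := by
  have h : ⇑u '' S = ⇑(u.toLinearEquiv : V →ₗ[ℝ] V) '' S := rfl
  rw [h, Submodule.span_image, LinearEquiv.finrank_map_eq]

/-- With compatible chambers `t₊`, `t̃₊` and the lifting homomorphism
`j : W̃ → W`, the compatible Weyl set `W_com` is stable under the duality map
`w ↦ w* = j(w̃₀) w w₀`, where `w₀` and `w̃₀` are the longest elements of `W` and `W̃`;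
moreover `t̃_{w*} = −w̃₀ t̃_w` and `f*(v*𝒞) = −w̃₀ f*(v𝒞)` for all `w, v ∈ W_com`.
Here `u = j(w̃₀)` is the lift of `w̃₀`: an element of `W` preserving `t̃` whose restriction
to `t̃` is `w̃₀` (so it carries `t̃₊` to `−t̃₊`). -/
theorem duality_of_cubicles
    (Rplus Rtplus : Finset V) (Vt : Submodule ℝ V)
    (hR0 : (0 : V) ∉ Rplus)
    (hstab : ∀ α ∈ rootsOf Rplus, ∀ β ∈ rootsOf Rplus, reflv α β ∈ rootsOf Rplus)
    (hRt : ∀ α ∈ Rtplus, (α : V) ∈ Vt)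
    (hsubroot : ∀ αt ∈ Rtplus, ∃ α ∈ rootsOf Rplus, projV Vt α = αt)
    (hcompat : 1 ∈ WcomOf Rplus Rtplus Vt)
    -- `w₀`, the longest element of `W`: it maps `R₊` onto `−R₊`
    (w0 : V ≃ₗᵢ[ℝ] V) (hw0 : w0 ∈ weylOf (rootsOf Rplus))
    (hw0neg : ⇑w0 '' (Rplus : Set V) = -(Rplus : Set V))
    -- `u = j(w̃₀)`, the lift of the longest element `w̃₀` of `W̃`
    (u : V ≃ₗᵢ[ℝ] V) (hu : u ∈ weylOf (rootsOf Rplus))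
    (huV : ∀ x ∈ Vt, u x ∈ Vt)
    (hut : ⇑u '' ttplusOf Rtplus Vt = -(ttplusOf Rtplus Vt)) :
    (∀ w ∈ WcomOf Rplus Rtplus Vt, u * w * w0 ∈ WcomOf Rplus Rtplus Vt) ∧
    (∀ w ∈ WcomOf Rplus Rtplus Vt,
      cubicle Rplus Vt (u * w * w0) = -(⇑u '' cubicle Rplus Vt w)) ∧
    (∀ v ∈ WcomOf Rplus Rtplus Vt,
      projV Vt '' (⇑(u * v * w0) '' coneOf Rplus)
        = -(⇑u '' (projV Vt '' (⇑v '' coneOf Rplus)))) := by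
  have hch : ⇑w0 '' chamberOf Rplus = -(chamberOf Rplus) := image_chamber_neg' Rplus w0 hw0neg
  have hcone : ⇑w0 '' coneOf Rplus = -(coneOf Rplus) := image_cone_neg' Rplus w0 hw0neg
  have hVt : ⇑u '' (Vt : Set V) = (Vt : Set V) := image_Vt_eq' Vt u huV
  have hproj : ∀ x, projV Vt (u x) = u (projV Vt x) := proj_comm' Vt u huV
  have himg : ∀ w : V ≃ₗᵢ[ℝ] V,
      ⇑(u * w * w0) '' chamberOf Rplus = -(⇑u '' (⇑w '' chamberOf Rplus)) := by
    intro w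
    rw [LinearIsometryEquiv.coe_mul, Set.image_comp, LinearIsometryEquiv.coe_mul,
      Set.image_comp, hch, image_neg_comm' w, image_neg_comm' u]
  have mem1 : ∀ w ∈ WcomOf Rplus Rtplus Vt, u * w * w0 ∈ WcomOf Rplus Rtplus Vt := by
    intro w hw
    obtain ⟨hwW, hwrk⟩ := hw
    refine ⟨mul_mem (mul_mem hu hwW) hw0, ?_⟩
    have hset : (⇑(u * w * w0) '' chamberOf Rplus) ∩ ttplusOf Rtplus Vt
        = -(⇑u '' ((⇑w '' chamberOf Rplus) ∩ ttplusOf Rtplus Vt)) := by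
      rw [himg w, Set.image_inter u.injective, neg_inter', hut, neg_neg]
    rw [hset, Submodule.span_neg, finrank_span_image']
    exact hwrk
  have cub : ∀ w ∈ WcomOf Rplus Rtplus Vt,
      cubicle Rplus Vt (u * w * w0) = -(⇑u '' cubicle Rplus Vt w) := by
    intro w _
    unfold cubicle
    rw [himg w, Set.image_inter u.injective, neg_inter', hVt]
    congr 1
    ext x; simp [Set.mem_neg]
  refine ⟨mem1, cub, ?_⟩
  intro v _
  rw [LinearIsometryEquiv.coe_mul, Set.image_comp, LinearIsometryEquiv.coe_mul,
    Set.image_comp, hcone, image_neg_of_odd' ⇑v (map_neg v),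
    image_neg_of_odd' ⇑u (map_neg u),
    image_neg_of_odd' (projV Vt) (fun x => by simp [projV]) ]
  congr 1
  rw [← Set.image_comp (projV Vt) ⇑u, ← Set.image_comp ⇑u (projV Vt)]
  have hc : projV Vt ∘ ⇑u = ⇑u ∘ projV Vt := funext hproj
  rw [hc]
end
end
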